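/- The Schwartz–Bruhat space is stable under the p-adic Moyal product: for every θ ∈ ℚ_p \ {0} and all f₁, f₂ ∈ 𝒟(ℚ_p^{2d}), the double integral defining (f₁ ⋆_θ f₂)(X) is absolutely convergent for every X, and the resulting function f₁ ⋆_θ f₂ : ℚ_p^{2d} → ℂ is again locally constant with compact support. -/

import Mathlib

open MeasureTheory Complex

noncomputable section

variable {p : ℕ} [Fact p.Prime]

/-- Borel measurable structure on the `p`-adic numbers. -/
instance : MeasurableSpace ℚ_[p] := borel _
instance : BorelSpace ℚ_[p] := ⟨rfl⟩

/-- The `p`-adic phase space `ℚ_p^d × ℚ_p^d  (= ℚ_p^{2d})`. -/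
abbrev PadicPhase (p : ℕ) [Fact p.Prime] (d : ℕ) : Type :=
  (Fin d → ℚ_[p]) × (Fin d → ℚ_[p])

/-- `μ₀(X) = max {1, max_i |x_i|_p, max_i |ξ_i|_p}` (the Pi-norm is the sup-norm). -/
def mu0 {d : ℕ} (X : PadicPhase p d) : ℝ := max 1 (max ‖X.1‖ ‖X.2‖)

/-- The standard symplectic form `[X,Y] = ⟨y,ξ⟩ − ⟨x,η⟩` for `X = (x,ξ)`, `Y = (y,η)`. -/
def symp {d : ℕ} (X Y : PadicPhase p d) : ℚ_[p] :=
  (∑ i, Y.1 i * X.2 i) - (∑ i, X.1 i * Y.2 i)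

/-- `ψ : ℚ_p → ℂ` is a continuous additive character of modulus one, trivial on `ℤ_p`
but nontrivial on `p⁻¹ℤ_p` (i.e. of conductor `ℤ_p`). -/
structure IsStdChar (p : ℕ) [Fact p.Prime] (ψ : ℚ_[p] → ℂ) : Prop where
  continuous : Continuous ψ
  map_add : ∀ x y : ℚ_[p], ψ (x + y) = ψ x * ψ y
  norm_one : ∀ x : ℚ_[p], ‖ψ x‖ = 1
  trivial_on_int : ∀ x : ℚ_[p], ‖x‖ ≤ 1 → ψ x = 1
  nontrivial : ∃ x : ℚ_[p], ‖x‖ ≤ (p : ℝ) ∧ ψ x ≠ 1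

/-- The `p`-adic Moyal product
`(f₁ ⋆_θ f₂)(X) = |θ|_p^{-2d} ∫∫ ψ(−(2/θ)[Y−X, Z−X]) f₁(Y) f₂(Z) dY dZ`. -/
def moyal {p : ℕ} [Fact p.Prime] {d : ℕ} (μ : Measure (PadicPhase p d))
    (ψ : ℚ_[p] → ℂ) (θ : ℚ_[p]) (f₁ f₂ : PadicPhase p d → ℂ)
    (X : PadicPhase p d) : ℂ :=
  (((‖θ‖ ^ (2 * d))⁻¹ : ℝ) : ℂ) *
    ∫ YZ : PadicPhase p d × PadicPhase p d,
      ψ (-(2 / θ) * symp (YZ.1 - X) (YZ.2 - X)) * f₁ YZ.1 * f₂ YZ.2 ∂(μ.prod μ)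

/-! For `c = -2/θ` and `X` fixed, write `F_X(Y, Z) = ψ(c[Y - X, Z - X]) f₁(Y) f₂(Z)`.
`F_X` is continuous with compact support, hence integrable. Moving the base point from `X` to
`X + W` changes the phase by `c[W, Y - Z]`, which lies in `ℤ_p` on the supports of `f₁, f₂`
once `W` is small; so `X ↦ F_X` is itself locally constant. For `|X|` large, choose `t` with
`ψ(t) ≠ 1` and `w` with `c[X, w] = -t` and `|w| = |t| / (|c| |X|)`: translating `Z` by `w` does
not change `f₂` (`w` is small) and multiplies `F_X` by `ψ(t)` (`c[Y, w] ∈ ℤ_p` on the support of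
`f₁`), so the integral of `F_X` equals `ψ(t)` times itself and vanishes. -/

theorem IsLocallyConstant.exists_pos_forall_dist_lt_eq {α β : Type*} [PseudoMetricSpace α]
    [Zero β] {f : α → β} (hf : IsLocallyConstant f) (hf' : HasCompactSupport f) :
    ∃ δ > 0, ∀ x y, dist x y < δ → f x = f y := by
  obtain ⟨δ, hδ, hball⟩ := lebesgue_number_lemma_of_metric hf' (c := fun b : β => f ⁻¹' {b})
    (fun b => hf _) (fun x _ => Set.mem_iUnion.2 ⟨f x, rfl⟩)
  have hsupp : ∀ x y, x ∈ tsupport f → dist x y < δ → f x = f y := fun x y hx hxy => by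
    obtain ⟨b, hb⟩ := hball x hx
    rw [hb (Metric.mem_ball_self hδ), hb (Metric.mem_ball'.2 hxy)]
  refine ⟨δ, hδ, fun x y hxy => ?_⟩
  by_cases hx : x ∈ tsupport f
  · exact hsupp x y hx hxy
  by_cases hy : y ∈ tsupport f
  · exact (hsupp y x hy (dist_comm x y ▸ hxy)).symm
  rw [image_eq_zero_of_notMem_tsupport hx, image_eq_zero_of_notMem_tsupport hy]

theorem HasCompactSupport.exists_pos_forall_norm_le {E β : Type*} [SeminormedAddCommGroup E]
    [Zero β] {f : E → β} (hf : HasCompactSupport f) : ∃ R > 0, ∀ x, f x ≠ 0 → ‖x‖ ≤ R := by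
  obtain ⟨R, hR, hfR⟩ := hf.isBounded.exists_pos_norm_le
  exact ⟨R, hR, fun x hx => hfR x (subset_tsupport f hx)⟩

theorem integral_eq_zero_of_add_right_eq_smul {G E : Type*} [MeasurableSpace G] [AddGroup G]
    [MeasurableAdd G] [NormedAddCommGroup E] [NormedSpace ℂ E] (μ : Measure G)
    [μ.IsAddRightInvariant] {F : G → E} {a : ℂ} (ha : a ≠ 1) {w : G}
    (hF : ∀ x, F (x + w) = a • F x) : ∫ x, F x ∂μ = 0 := by
  have h : ∫ x, F x ∂μ = a • ∫ x, F x ∂μ := by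
    simp_rw [← integral_smul, ← hF, integral_add_right_eq_self]
  have h' : (1 - a) • ∫ x, F x ∂μ = 0 := by rw [sub_smul, one_smul, ← h, sub_self]
  exact (smul_eq_zero.1 h').resolve_left (sub_ne_zero.2 ha.symm)

theorem IsUltrametricDist.norm_sum_mul_le {ι R : Type*} [Fintype ι] [NormedRing R]
    [IsUltrametricDist R] (u v : ι → R) : ‖∑ i, u i * v i‖ ≤ ‖u‖ * ‖v‖ :=
  norm_sum_le_of_forall_le_of_nonneg (by positivity) fun i _ =>
    (norm_mul_le _ _).trans <|
      mul_le_mul (norm_le_pi_norm u i) (norm_le_pi_norm v i) (norm_nonneg _) (norm_nonneg _)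

section Symplectic

variable {d : ℕ}

theorem norm_symp_le (X Y : PadicPhase p d) : ‖symp X Y‖ ≤ ‖X‖ * ‖Y‖ := by
  have h₁ : ‖∑ i, Y.1 i * X.2 i‖ ≤ ‖X‖ * ‖Y‖ := by
    rw [mul_comm]
    exact (IsUltrametricDist.norm_sum_mul_le _ _).trans
      (mul_le_mul (norm_fst_le Y) (norm_snd_le X) (norm_nonneg _) (norm_nonneg _))
  have h₂ : ‖∑ i, X.1 i * Y.2 i‖ ≤ ‖X‖ * ‖Y‖ :=
    (IsUltrametricDist.norm_sum_mul_le _ _).trans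
      (mul_le_mul (norm_fst_le X) (norm_snd_le Y) (norm_nonneg _) (norm_nonneg _))
  rw [symp, sub_eq_add_neg]
  exact (IsUltrametricDist.norm_add_le_max _ _).trans (max_le h₁ (by rwa [norm_neg]))

theorem symp_sub_sub_eq_add (X X' Y Z : PadicPhase p d) :
    symp (Y - X') (Z - X') = symp (Y - X) (Z - X) + symp (X' - X) (Y - Z) := by
  simp only [symp, Prod.fst_sub, Prod.snd_sub, Pi.sub_apply, sub_mul, mul_sub,
    Finset.sum_sub_distrib]
  ring

theorem symp_sub_add_sub (X Y Z w : PadicPhase p d) :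
    symp (Y - X) (Z + w - X) = symp (Y - X) (Z - X) + symp Y w - symp X w := by
  simp only [symp, Prod.fst_sub, Prod.snd_sub, Prod.fst_add, Prod.snd_add, Pi.sub_apply,
    Pi.add_apply, sub_mul, mul_sub, add_mul, mul_add, Finset.sum_sub_distrib,
    Finset.sum_add_distrib]
  ring

theorem exists_symp_eq {X : PadicPhase p d} (hX : X ≠ 0) (s : ℚ_[p]) :
    ∃ w : PadicPhase p d, ‖X‖ * ‖w‖ = ‖s‖ ∧ symp X w = s := by
  classical
  have hX' : ‖X‖ ≠ 0 := norm_ne_zero_iff.2 hX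
  have hcoord : ∀ u : Fin d → ℚ_[p], ‖u‖ = ‖X‖ → ∃ j, u j ≠ 0 ∧ ‖u j‖ = ‖X‖ := fun u hu => by
    obtain ⟨j₀, -⟩ := Function.ne_iff.1 (norm_ne_zero_iff.1 (hu ▸ hX') : u ≠ 0)
    have : Nonempty (Fin d) := ⟨j₀⟩
    obtain ⟨j, hj⟩ := (IsGreatest.pi_norm u).1
    have hj : ‖u j‖ = ‖X‖ := hj.trans hu
    exact ⟨j, norm_ne_zero_iff.1 (hj ▸ hX'), hj⟩
  rcases le_total ‖X.1‖ ‖X.2‖ with h | h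
  · obtain ⟨j, hj0, hj⟩ := hcoord X.2 (by rw [Prod.norm_def, max_eq_right h])
    refine ⟨(Pi.single j (s / X.2 j), 0), ?_, ?_⟩
    · simp only [Prod.norm_mk, Pi.norm_single, norm_div, hj, norm_zero]
      rw [max_eq_left (by positivity), mul_div_cancel₀ _ hX']
    · simp [symp, Pi.single_apply, hj0]
  · obtain ⟨j, hj0, hj⟩ := hcoord X.1 (by rw [Prod.norm_def, max_eq_left h])
    refine ⟨(0, Pi.single j (-(s / X.1 j))), ?_, ?_⟩
    · simp only [Prod.norm_mk, norm_zero, Pi.norm_single, norm_neg, norm_div, hj]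
      rw [max_eq_right (by positivity), mul_div_cancel₀ _ hX']
    · simp [symp, Pi.single_apply, mul_div_cancel₀ _ hj0]

theorem IsStdChar.apply_mul_symp_eq_one {ψ : ℚ_[p] → ℂ} (hψ : IsStdChar p ψ)
    {c : ℚ_[p]} {X Y : PadicPhase p d} (h : ‖c‖ * (‖X‖ * ‖Y‖) ≤ 1) :
    ψ (c * symp X Y) = 1 :=
  hψ.trivial_on_int _ <| by
    rw [norm_mul]
    exact (mul_le_mul_of_nonneg_left (norm_symp_le X Y) (norm_nonneg c)).trans h

end Symplectic

section Integrand

variable {d : ℕ} {ψ : ℚ_[p] → ℂ} {c : ℚ_[p]} {f₁ f₂ : PadicPhase p d → ℂ}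

def moyalIntegrand (ψ : ℚ_[p] → ℂ) (c : ℚ_[p]) (f₁ f₂ : PadicPhase p d → ℂ)
    (X : PadicPhase p d) (YZ : PadicPhase p d × PadicPhase p d) : ℂ :=
  ψ (c * symp (YZ.1 - X) (YZ.2 - X)) * f₁ YZ.1 * f₂ YZ.2

theorem moyal_eq_comp_moyalIntegrand (μ : Measure (PadicPhase p d)) (θ : ℚ_[p]) :
    moyal μ ψ θ f₁ f₂ = (fun F => (((‖θ‖ ^ (2 * d))⁻¹ : ℝ) : ℂ) * ∫ YZ, F YZ ∂(μ.prod μ)) ∘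
      moyalIntegrand ψ (-(2 / θ)) f₁ f₂ :=
  rfl

theorem integrable_moyalIntegrand (μ : Measure (PadicPhase p d)) [IsFiniteMeasureOnCompacts μ]
    [SFinite μ] (hψ : Continuous ψ) (hf₁ : Continuous f₁) (hf₂ : Continuous f₂)
    (hf₁' : HasCompactSupport f₁) (hf₂' : HasCompactSupport f₂) (X : PadicPhase p d) :
    Integrable (moyalIntegrand ψ c f₁ f₂ X) (μ.prod μ) := by
  refine Continuous.integrable_of_hasCompactSupport (by unfold moyalIntegrand symp; fun_prop) ?_
  refine HasCompactSupport.intro (hf₁'.prod hf₂') fun YZ hYZ => ?_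
  rcases not_and_or.1 (Set.mem_prod.not.1 hYZ) with h | h
  · simp [moyalIntegrand, image_eq_zero_of_notMem_tsupport h]
  · simp [moyalIntegrand, image_eq_zero_of_notMem_tsupport h]

theorem isLocallyConstant_moyalIntegrand (hψ : IsStdChar p ψ)
    (hf₁' : HasCompactSupport f₁) (hf₂' : HasCompactSupport f₂) :
    IsLocallyConstant (moyalIntegrand ψ c f₁ f₂) := by
  obtain ⟨R₁, hR₁, hf₁R⟩ := hf₁'.exists_pos_forall_norm_le
  obtain ⟨R₂, hR₂, hf₂R⟩ := hf₂'.exists_pos_forall_norm_le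
  set K := ‖c‖ * (R₁ + R₂)
  rw [IsLocallyConstant.iff_eventually_eq]
  intro X
  filter_upwards [Metric.ball_mem_nhds X (by positivity : (0 : ℝ) < 1 / (K + 1))] with X' hX'
  funext ⟨Y, Z⟩
  by_cases hY : f₁ Y = 0
  · simp [moyalIntegrand, hY]
  by_cases hZ : f₂ Z = 0
  · simp [moyalIntegrand, hZ]
  have hsmall : ‖c‖ * (‖X' - X‖ * ‖Y - Z‖) ≤ 1 := by
    have hYZ : ‖Y - Z‖ ≤ R₁ + R₂ := (norm_sub_le Y Z).trans (add_le_add (hf₁R Y hY) (hf₂R Z hZ))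
    have hX'X : ‖X' - X‖ ≤ 1 / (K + 1) := (mem_ball_iff_norm.1 hX').le
    calc ‖c‖ * (‖X' - X‖ * ‖Y - Z‖) ≤ ‖c‖ * (1 / (K + 1) * (R₁ + R₂)) := by gcongr
      _ = K / (K + 1) := by ring
      _ ≤ 1 := (div_le_one (by positivity)).2 (by linarith)
  simp only [moyalIntegrand, symp_sub_sub_eq_add X X' Y Z, mul_add, hψ.map_add,
    hψ.apply_mul_symp_eq_one hsmall, mul_one]

theorem moyalIntegrand_add_snd (hψ : IsStdChar p ψ) {w : PadicPhase p d}
    (hf₁w : ∀ Y, f₁ Y ≠ 0 → ‖c‖ * (‖Y‖ * ‖w‖) ≤ 1) (hf₂w : ∀ Z, f₂ (Z + w) = f₂ Z)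
    (X : PadicPhase p d) (YZ : PadicPhase p d × PadicPhase p d) :
    moyalIntegrand ψ c f₁ f₂ X (YZ + (0, w)) =
      ψ (-(c * symp X w)) * moyalIntegrand ψ c f₁ f₂ X YZ := by
  obtain ⟨Y, Z⟩ := YZ
  by_cases hY : f₁ Y = 0
  · simp [moyalIntegrand, hY]
  have hphase : c * symp (Y - X) (Z + w - X) =
      c * symp (Y - X) (Z - X) + c * symp Y w + -(c * symp X w) := by
    rw [symp_sub_add_sub]
    ring
  simp only [moyalIntegrand, Prod.mk_add_mk, add_zero, hf₂w, hphase, hψ.map_add,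
    hψ.apply_mul_symp_eq_one (hf₁w Y hY)]
  ring

theorem exists_forall_norm_lt_integral_moyalIntegrand_eq_zero (μ : Measure (PadicPhase p d))
    [μ.IsAddRightInvariant] [SFinite μ] (hψ : IsStdChar p ψ) (hc : c ≠ 0)
    (hf₁' : HasCompactSupport f₁) (hf₂ : IsLocallyConstant f₂) (hf₂' : HasCompactSupport f₂) :
    ∃ M, ∀ X, M < ‖X‖ → ∫ YZ, moyalIntegrand ψ c f₁ f₂ X YZ ∂(μ.prod μ) = 0 := by
  obtain ⟨t, -, ht⟩ := hψ.nontrivial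
  obtain ⟨R, hR, hf₁R⟩ := hf₁'.exists_pos_forall_norm_le
  obtain ⟨δ, hδ, hf₂δ⟩ := hf₂.exists_pos_forall_dist_lt_eq hf₂'
  have hc' : 0 < ‖c‖ := norm_pos_iff.2 hc
  refine ⟨max (R * ‖t‖) (‖t‖ / (‖c‖ * δ)), fun X hX => ?_⟩
  obtain ⟨hXR, hXδ⟩ := max_lt_iff.1 hX
  have hX₀ : 0 < ‖X‖ := (le_max_of_le_left (by positivity)).trans_lt hX
  obtain ⟨w, hw, hXw⟩ := exists_symp_eq (norm_pos_iff.1 hX₀) (-(t / c))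
  have hcw : ‖c‖ * (‖X‖ * ‖w‖) = ‖t‖ := by
    rw [hw, norm_neg, norm_div, mul_div_cancel₀ _ hc'.ne']
  have hwδ : ‖w‖ < δ := by
    rw [div_lt_iff₀ (by positivity)] at hXδ
    refine lt_of_mul_lt_mul_left (a := ‖c‖ * ‖X‖) ?_ (by positivity)
    rw [mul_assoc, hcw]
    linarith
  have hf₁w : ∀ Y, f₁ Y ≠ 0 → ‖c‖ * (‖Y‖ * ‖w‖) ≤ 1 := fun Y hY => by
    refine le_of_mul_le_mul_left ?_ hX₀
    calc ‖X‖ * (‖c‖ * (‖Y‖ * ‖w‖)) = ‖Y‖ * ‖t‖ := by rw [← hcw]; ring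
      _ ≤ R * ‖t‖ := by gcongr; exact hf₁R Y hY
      _ ≤ ‖X‖ * 1 := by linarith
  have hf₂w : ∀ Z, f₂ (Z + w) = f₂ Z := fun Z => hf₂δ _ _ (by simpa [dist_eq_norm] using hwδ)
  have hψt : ψ (-(c * symp X w)) = ψ t := by rw [hXw, mul_neg, neg_neg, mul_div_cancel₀ _ hc]
  -- instance search does not find these two on a product of phase spaces
  have : MeasurableAdd (PadicPhase p d × PadicPhase p d) := ContinuousAdd.measurableAdd
  have : (μ.prod μ).IsAddRightInvariant := Measure.prod.instIsAddRightInvariant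
  refine integral_eq_zero_of_add_right_eq_smul (μ.prod μ) ht (w := (0, w)) fun YZ => ?_
  rw [moyalIntegrand_add_snd hψ hf₁w hf₂w, hψt, smul_eq_mul]

end Integrand

theorem moyal_schwartzBruhat_stable_general {p : ℕ} [Fact p.Prime]
    {d : ℕ}
    (μ : Measure (PadicPhase p d)) [μ.IsAddHaarMeasure]
    (ψ : ℚ_[p] → ℂ) (hψ : IsStdChar p ψ)
    (θ : ℚ_[p]) (hθ : θ ≠ 0)
    (f₁ f₂ : PadicPhase p d → ℂ)
    (hf₁ : IsLocallyConstant f₁) (hf₁' : HasCompactSupport f₁)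
    (hf₂ : IsLocallyConstant f₂) (hf₂' : HasCompactSupport f₂) :
    (∀ X : PadicPhase p d,
      Integrable
        (fun YZ : PadicPhase p d × PadicPhase p d =>
          ψ (-(2 / θ) * symp (YZ.1 - X) (YZ.2 - X)) * f₁ YZ.1 * f₂ YZ.2) (μ.prod μ)) ∧
    IsLocallyConstant (moyal μ ψ θ f₁ f₂) ∧
    HasCompactSupport (moyal μ ψ θ f₁ f₂) := by
  have hc : -(2 / θ) ≠ 0 := neg_ne_zero.2 (div_ne_zero two_ne_zero hθ)
  obtain ⟨M, hM⟩ := exists_forall_norm_lt_integral_moyalIntegrand_eq_zero μ hψ hc hf₁' hf₂ hf₂'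
  rw [moyal_eq_comp_moyalIntegrand]
  refine ⟨integrable_moyalIntegrand μ hψ.continuous hf₁.continuous hf₂.continuous hf₁' hf₂',
    (isLocallyConstant_moyalIntegrand hψ hf₁' hf₂').comp _,
    HasCompactSupport.intro (isCompact_closedBall 0 M) fun X hX => ?_⟩
  rw [Function.comp_apply, hM X (by simpa using hX), mul_zero]

/-- The Schwartz–Bruhat space is stable under the `p`-adic Moyal product: the defining
double integral is absolutely convergent at every point, and `f₁ ⋆_θ f₂` is again
locally constant with compact support. -/
theorem moyal_schwartzBruhat_stable {p : ℕ} [Fact p.Prime] (hp : Odd p)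
    {d : ℕ} (hd : 1 ≤ d)
    (μ : Measure (PadicPhase p d)) [μ.IsAddHaarMeasure]
    (hμ : μ {X : PadicPhase p d | ‖X.1‖ ≤ 1 ∧ ‖X.2‖ ≤ 1} = 1)
    (ψ : ℚ_[p] → ℂ) (hψ : IsStdChar p ψ)
    (θ : ℚ_[p]) (hθ : θ ≠ 0)
    (f₁ f₂ : PadicPhase p d → ℂ)
    (hf₁ : IsLocallyConstant f₁) (hf₁' : HasCompactSupport f₁)
    (hf₂ : IsLocallyConstant f₂) (hf₂' : HasCompactSupport f₂) :
    (∀ X : PadicPhase p d,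
      Integrable
        (fun YZ : PadicPhase p d × PadicPhase p d =>
          ψ (-(2 / θ) * symp (YZ.1 - X) (YZ.2 - X)) * f₁ YZ.1 * f₂ YZ.2) (μ.prod μ)) ∧
    IsLocallyConstant (moyal μ ψ θ f₁ f₂) ∧
    HasCompactSupport (moyal μ ψ θ f₁ f₂) :=
  moyal_schwartzBruhat_stable_general μ ψ hψ θ hθ f₁ f₂ hf₁ hf₁' hf₂ hf₂'
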